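/- For every i ∈ ℤ, the function CTB_i : ℝ → ℝ is twice continuously differentiable on all of ℝ; in particular, the four trigonometric polynomial pieces and their first and second derivatives agree at the interior knots x_{i−1}, x_i, x_{i+1}, and the outermost pieces join the zero function C²-smoothly at x_{i−2} and x_{i+2}. -/

import Mathlib

/-!
With `d = h/2` and `v = (x - x_i)/2`, `sin d · sin 2d · θ · CTB_i` is a fixed combination of the
truncated cubes `sin³₊(v - m d)`, `m = -2, …, 2` (`sin³₊ t = sin³ t` for `t ≥ 0`, `0` otherwise),
and a truncated cube is `C²` because `sin³` vanishes to third order at `0`. The coefficients are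
those of the identically vanishing combination of the five shifts of `sin³`, which exists because
`sin³` lies in the four-dimensional span of `sin`, `cos`, `sin 3·`, `cos 3·`: it makes the
combination vanish beyond the last knot, and on each knot interval the surviving terms reproduce
the piece of `CTB_i` by the addition formulas.
-/

/-- The knot `x_j = a + j·h` of a uniform partition. -/
noncomputable def knot (h a : ℝ) (j : ℤ) : ℝ := a + (j : ℝ) * h

/-- The cubic trigonometric B-spline `CTB_i` over the uniform knots `x_j = a + j·h`,
built from `ω_j(x) = sin((x − x_j)/2)`, `φ_j(x) = sin((x_j − x)/2)` and
`θ = sin(h/2)·sin(h)·sin(3h/2)`. -/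
noncomputable def CTB (h a : ℝ) (i : ℤ) (x : ℝ) : ℝ :=
  let ω : ℤ → ℝ := fun j => Real.sin ((x - knot h a j) / 2)
  let φ : ℤ → ℝ := fun j => Real.sin ((knot h a j - x) / 2)
  let θ : ℝ := Real.sin (h / 2) * Real.sin h * Real.sin (3 * h / 2)
  if knot h a (i - 2) ≤ x ∧ x ≤ knot h a (i - 1) then
    (ω (i - 2)) ^ 3 / θ
  else if knot h a (i - 1) ≤ x ∧ x ≤ knot h a i then
    (ω (i - 2) * (ω (i - 2) * φ i + φ (i + 1) * ω (i - 1)) + φ (i + 2) * (ω (i - 1)) ^ 2) / θ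
  else if knot h a i ≤ x ∧ x ≤ knot h a (i + 1) then
    (ω (i - 2) * (φ (i + 1)) ^ 2 + φ (i + 2) * (ω (i - 1) * φ (i + 1) + φ (i + 2) * ω i)) / θ
  else if knot h a (i + 1) ≤ x ∧ x ≤ knot h a (i + 2) then
    (φ (i + 2)) ^ 3 / θ
  else 0

open Set Real

theorem hasDerivAt_indicator_Ici {f f' : ℝ → ℝ} (hf : ∀ t, HasDerivAt f (f' t) t)
    (h₀ : f 0 = 0) (h₀' : f' 0 = 0) (t : ℝ) :
    HasDerivAt ((Ici 0).indicator f) ((Ici 0).indicator f' t) t := by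
  rcases lt_trichotomy t 0 with ht | rfl | ht
  · have hzero : (Ici 0).indicator f =ᶠ[nhds t] fun _ => 0 := by
      filter_upwards [Iio_mem_nhds ht] with s hs
      exact indicator_of_notMem (s := Ici 0) (not_le.mpr hs) f
    rw [indicator_of_notMem (s := Ici 0) (not_le.mpr ht)]
    exact (hasDerivAt_const t 0).congr_of_eventuallyEq hzero
  · rw [indicator_of_mem self_mem_Ici, h₀', ← hasDerivWithinAt_univ, ← Iic_union_Ici]
    refine HasDerivWithinAt.union ?_ ?_
    · refine (hasDerivWithinAt_const (0 : ℝ) _ (0 : ℝ)).congr (fun s hs => ?_) (by simp [h₀])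
      rcases (mem_Iic.mp hs).lt_or_eq with hs | rfl
      · exact indicator_of_notMem (s := Ici 0) (not_le.mpr hs) f
      · simp [h₀]
    · have h := (hf 0).hasDerivWithinAt.congr (s := Ici 0)
        (fun s hs => indicator_of_mem hs f) (indicator_of_mem self_mem_Ici f)
      rwa [h₀'] at h
  · have hf' : (Ici 0).indicator f =ᶠ[nhds t] f := by
      filter_upwards [Ioi_mem_nhds ht] with s hs
      exact indicator_of_mem (s := Ici 0) hs.le f
    rw [indicator_of_mem (s := Ici 0) ht.le]
    exact (hf t).congr_of_eventuallyEq hf'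

theorem ContDiff.indicator_Ici {n : ℕ} {f : ℝ → ℝ} (hf : ContDiff ℝ n f)
    (h₀ : ∀ k ≤ n, iteratedDeriv k f 0 = 0) : ContDiff ℝ n ((Ici 0).indicator f) := by
  induction n generalizing f with
  | zero =>
    have hmax : (Ici 0).indicator f = f ∘ fun t => max t 0 := by
      funext t
      simp only [Function.comp_apply, indicator_apply, mem_Ici]
      split_ifs with ht
      · rw [max_eq_left ht]
      · rw [max_eq_right (not_le.mp ht).le]
        simpa using (h₀ 0 le_rfl).symm
    rw [Nat.cast_zero, contDiff_zero] at hf ⊢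
    rw [hmax]
    exact hf.comp (continuous_id.max continuous_const)
  | succ n ih =>
    have hdiff : Differentiable ℝ f := hf.differentiable (by simp)
    have hderiv : ∀ t : ℝ,
        HasDerivAt ((Ici 0).indicator f) ((Ici 0).indicator (deriv f) t) t :=
      hasDerivAt_indicator_Ici (fun t => (hdiff t).hasDerivAt) (by simpa using h₀ 0 (by omega))
        (by simpa using h₀ 1 (by omega))
    rw [Nat.cast_succ, contDiff_succ_iff_deriv] at hf ⊢
    refine ⟨fun t => (hderiv t).differentiableAt, by simp, ?_⟩
    rw [show deriv ((Ici 0).indicator f) = (Ici 0).indicator (deriv f) from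
      funext fun t => (hderiv t).deriv]
    refine ih hf.2.2 fun k hk => ?_
    rw [← iteratedDeriv_succ']
    exact h₀ (k + 1) (by omega)

noncomputable def truncSinCube : ℝ → ℝ := (Ici 0).indicator fun t => sin t ^ 3

theorem truncSinCube_of_nonneg {t : ℝ} (ht : 0 ≤ t) : truncSinCube t = sin t ^ 3 :=
  indicator_of_mem (s := Ici 0) ht _

theorem truncSinCube_of_nonpos {t : ℝ} (ht : t ≤ 0) : truncSinCube t = 0 := by
  rcases ht.lt_or_eq with ht | rfl
  · exact indicator_of_notMem (s := Ici 0) (not_le.mpr ht) _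
  · simp [truncSinCube]

theorem contDiff_truncSinCube : ContDiff ℝ 2 truncSinCube := by
  have hd : deriv (fun t : ℝ => sin t ^ 3) = fun t => 3 * sin t ^ 2 * cos t := by
    funext t
    simp
  have hd₂ : deriv (fun t : ℝ => 3 * sin t ^ 2 * cos t) 0 = 0 := by
    simpa using (((hasDerivAt_sin 0).fun_pow 2).const_mul 3 |>.fun_mul (hasDerivAt_cos 0)).deriv
  refine ContDiff.indicator_Ici (n := 2) (by fun_prop) fun k hk => ?_
  interval_cases k <;> simp [iteratedDeriv_succ, hd, hd₂]

noncomputable def ctbComb (d : ℝ) (P : ℝ → ℝ) (v : ℝ) : ℝ :=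
  sin d * sin (2 * d) * (P (v + 2 * d) + P (v - 2 * d))
    - sin (2 * d) * sin (4 * d) * (P (v + d) + P (v - d)) + sin (3 * d) * sin (4 * d) * P v

theorem contDiff_ctbComb {n : WithTop ℕ∞} {P : ℝ → ℝ} (hP : ContDiff ℝ n P) (d : ℝ) :
    ContDiff ℝ n (ctbComb d P) := by
  unfold ctbComb
  fun_prop

theorem ctbComb_sin_cube (d v : ℝ) : ctbComb d (fun t => sin t ^ 3) v = 0 := by
  simp only [ctbComb, show 3 * d = 2 * d + d by ring, show 4 * d = 2 * d + 2 * d by ring,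
    sin_add, sin_sub, sin_two_mul, cos_two_mul]
  ring

section truncSinCube

variable {d v : ℝ}

theorem ctbComb_truncSinCube_of_le_neg_two (hd : 0 ≤ d) (hv : v ≤ -2 * d) :
    ctbComb d truncSinCube v = 0 := by
  rw [ctbComb, truncSinCube_of_nonpos (by linarith : v + 2 * d ≤ 0),
    truncSinCube_of_nonpos (by linarith : v - 2 * d ≤ 0),
    truncSinCube_of_nonpos (by linarith : v + d ≤ 0),
    truncSinCube_of_nonpos (by linarith : v - d ≤ 0), truncSinCube_of_nonpos (by linarith : v ≤ 0)]
  ring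

theorem ctbComb_truncSinCube_of_two_le (hd : 0 ≤ d) (hv : 2 * d ≤ v) :
    ctbComb d truncSinCube v = 0 := by
  rw [← ctbComb_sin_cube d v, ctbComb, ctbComb,
    truncSinCube_of_nonneg (by linarith : 0 ≤ v + 2 * d),
    truncSinCube_of_nonneg (by linarith : 0 ≤ v - 2 * d),
    truncSinCube_of_nonneg (by linarith : 0 ≤ v + d),
    truncSinCube_of_nonneg (by linarith : 0 ≤ v - d), truncSinCube_of_nonneg (by linarith : 0 ≤ v)]

theorem ctbComb_truncSinCube_of_mem_Icc_neg_two_neg_one (hv : v ∈ Icc (-2 * d) (-d)) :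
    ctbComb d truncSinCube v = sin d * sin (2 * d) * sin (v + 2 * d) ^ 3 := by
  obtain ⟨hv₁, hv₂⟩ := hv
  rw [ctbComb, truncSinCube_of_nonneg (by linarith : 0 ≤ v + 2 * d),
    truncSinCube_of_nonpos (by linarith : v - 2 * d ≤ 0),
    truncSinCube_of_nonpos (by linarith : v + d ≤ 0),
    truncSinCube_of_nonpos (by linarith : v - d ≤ 0), truncSinCube_of_nonpos (by linarith : v ≤ 0)]
  ring

theorem ctbComb_truncSinCube_of_mem_Icc_neg_one_zero (hv : v ∈ Icc (-d) 0) :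
    ctbComb d truncSinCube v = sin d * sin (2 * d) * (sin (v + 2 * d) * (sin (v + 2 * d) * sin (-v)
      + sin (d - v) * sin (v + d)) + sin (2 * d - v) * sin (v + d) ^ 2) := by
  obtain ⟨hv₁, hv₂⟩ := hv
  rw [ctbComb, truncSinCube_of_nonneg (by linarith : 0 ≤ v + 2 * d),
    truncSinCube_of_nonpos (by linarith : v - 2 * d ≤ 0),
    truncSinCube_of_nonneg (by linarith : 0 ≤ v + d),
    truncSinCube_of_nonpos (by linarith : v - d ≤ 0), truncSinCube_of_nonpos hv₂]
  simp only [show 3 * d = 2 * d + d by ring, show 4 * d = 2 * d + 2 * d by ring,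
    sin_add, sin_sub, sin_neg, sin_two_mul, cos_two_mul]
  ring

theorem ctbComb_truncSinCube_of_mem_Icc_zero_one (hv : v ∈ Icc 0 d) :
    ctbComb d truncSinCube v = sin d * sin (2 * d) * (sin (v + 2 * d) * sin (d - v) ^ 2
      + sin (2 * d - v) * (sin (v + d) * sin (d - v) + sin (2 * d - v) * sin v)) := by
  obtain ⟨hv₁, hv₂⟩ := hv
  rw [ctbComb, truncSinCube_of_nonneg (by linarith : 0 ≤ v + 2 * d),
    truncSinCube_of_nonpos (by linarith : v - 2 * d ≤ 0),
    truncSinCube_of_nonneg (by linarith : 0 ≤ v + d),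
    truncSinCube_of_nonpos (by linarith : v - d ≤ 0), truncSinCube_of_nonneg hv₁]
  simp only [show 3 * d = 2 * d + d by ring, show 4 * d = 2 * d + 2 * d by ring,
    sin_add, sin_sub, sin_two_mul, cos_two_mul]
  ring

theorem ctbComb_truncSinCube_of_mem_Icc_one_two (hv : v ∈ Icc d (2 * d)) :
    ctbComb d truncSinCube v = sin d * sin (2 * d) * sin (2 * d - v) ^ 3 := by
  obtain ⟨hv₁, hv₂⟩ := hv
  rw [ctbComb, truncSinCube_of_nonneg (by linarith : 0 ≤ v + 2 * d),
    truncSinCube_of_nonpos (by linarith : v - 2 * d ≤ 0),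
    truncSinCube_of_nonneg (by linarith : 0 ≤ v + d),
    truncSinCube_of_nonneg (by linarith : 0 ≤ v - d), truncSinCube_of_nonneg (by linarith : 0 ≤ v)]
  simp only [show 3 * d = 2 * d + d by ring, show 4 * d = 2 * d + 2 * d by ring,
    sin_add, sin_sub, sin_two_mul, cos_two_mul]
  ring

end truncSinCube

theorem CTB_two_mul_eq_ctbComb {d : ℝ} (hd : 0 ≤ d) (hθ : sin d * sin (2 * d) * sin (3 * d) ≠ 0)
    (a : ℝ) (i : ℤ) :
    CTB (2 * d) a i = fun x => ctbComb d truncSinCube ((x - knot (2 * d) a i) / 2)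
      / (sin d * sin (2 * d) * (sin d * sin (2 * d) * sin (3 * d))) := by
  have hc : sin d * sin (2 * d) ≠ 0 := left_ne_zero_of_mul hθ
  funext x
  set v := (x - knot (2 * d) a i) / 2 with hv
  have hω₂ : (x - knot (2 * d) a (i - 2)) / 2 = v + 2 * d := by
    simp only [hv, knot]; push_cast; ring
  have hω₁ : (x - knot (2 * d) a (i - 1)) / 2 = v + d := by
    simp only [hv, knot]; push_cast; ring
  have hφ₀ : (knot (2 * d) a i - x) / 2 = -v := by
    simp only [hv]; ring
  have hφ₁ : (knot (2 * d) a (i + 1) - x) / 2 = d - v := by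
    simp only [hv, knot]; push_cast; ring
  have hφ₂ : (knot (2 * d) a (i + 2) - x) / 2 = 2 * d - v := by
    simp only [hv, knot]; push_cast; ring
  simp only [CTB, hω₂, hω₁, hφ₀, hφ₁, hφ₂, show 2 * d / 2 = d by ring,
    show 3 * (2 * d) / 2 = 3 * d by ring]
  split_ifs with h₁ h₂ h₃ h₄
  · rw [ctbComb_truncSinCube_of_mem_Icc_neg_two_neg_one ⟨by linarith, by linarith⟩,
      mul_div_mul_left _ _ hc]
  · rw [ctbComb_truncSinCube_of_mem_Icc_neg_one_zero ⟨by linarith, by linarith⟩,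
      mul_div_mul_left _ _ hc]
  · rw [ctbComb_truncSinCube_of_mem_Icc_zero_one ⟨by linarith, by linarith⟩,
      mul_div_mul_left _ _ hc]
  · rw [ctbComb_truncSinCube_of_mem_Icc_one_two ⟨by linarith, by linarith⟩,
      mul_div_mul_left _ _ hc]
  · rcases le_or_gt v (-2 * d) with hlo | hlo
    · rw [ctbComb_truncSinCube_of_le_neg_two hd hlo, zero_div]
    rcases le_or_gt (2 * d) v with hhi | hhi
    · rw [ctbComb_truncSinCube_of_two_le hd hhi, zero_div]
    simp only [not_and, not_le] at h₁ h₂ h₃ h₄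
    linarith [h₄ (h₃ (h₂ (h₁ (by linarith)).le).le).le]

/-- Each cubic trigonometric B-spline `CTB_i` is twice continuously
differentiable on all of `ℝ`. -/
theorem CTB_contDiff_two (h a : ℝ) (hh : 0 < h) (hh' : h < 2 * Real.pi / 3) (i : ℤ) :
    ContDiff ℝ 2 (CTB h a i) := by
  obtain ⟨d, rfl⟩ : ∃ d, h = 2 * d := ⟨h / 2, by ring⟩
  have hθ : 0 < sin d * sin (2 * d) * sin (3 * d) := by
    have := pi_pos
    refine mul_pos (mul_pos ?_ ?_) ?_ <;> apply sin_pos_of_pos_of_lt_pi <;> linarith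
  rw [CTB_two_mul_eq_ctbComb (by linarith) hθ.ne' a i]
  exact ((contDiff_ctbComb contDiff_truncSinCube d).comp (by fun_prop)).div_const _
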